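/- Any K_4-free graph on 7 vertices with 16 edges is isomorphic to the Turán graph T(7,3). -/

import Mathlib

/-- The part assignment for the Turán graph `T(7,3)`: parts of sizes 3, 2, 2. -/
def turanPart (v : Fin 7) : Fin 3 :=
  if (v : ℕ) < 3 then 0 else if (v : ℕ) < 5 then 1 else 2

/-- The Turán graph `T(7,3)`: the complete 3-partite graph with parts of sizes 3, 2, 2. -/
def turan73 : SimpleGraph (Fin 7) where
  Adj u v := turanPart u ≠ turanPart v
  symm := ⟨fun _ _ h => h.symm⟩
  loopless := ⟨fun _ h => h rfl⟩

/-! Turán's theorem identifies the `K₄`-free graphs on 7 vertices with the most edges as the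
copies of `turanGraph 7 3`, and that graph has exactly 16 edges. A `K₄`-free graph with 16 edges
is therefore extremal, hence isomorphic to `turanGraph 7 3`, which is `turan73` up to relabelling
the vertices. -/

open Finset SimpleGraph

namespace SimpleGraph

theorem CliqueFree.isTuranMaximal_of_card_edgeFinset_eq {V : Type*} [Fintype V]
    {G : SimpleGraph V} [DecidableRel G.Adj] {r : ℕ} (hG : G.CliqueFree (r + 1))
    (hcard : #G.edgeFinset = #(turanGraph (Fintype.card V) r).edgeFinset) :
    G.IsTuranMaximal r := by
  refine ⟨hG, fun H _ hH => ?_⟩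
  rw [hcard, card_edgeFinset_turanGraph]
  exact hH.card_edgeFinset_le

theorem CliqueFree.nonempty_iso_turanGraph_of_card_edgeFinset_eq {V : Type*} [Fintype V]
    {G : SimpleGraph V} [DecidableRel G.Adj] {r : ℕ} (hr : 0 < r) (hG : G.CliqueFree (r + 1))
    (hcard : #G.edgeFinset = #(turanGraph (Fintype.card V) r).edgeFinset) :
    Nonempty (G ≃g turanGraph (Fintype.card V) r) :=
  (isTuranMaximal_iff_nonempty_iso_turanGraph hr).1
    (hG.isTuranMaximal_of_card_edgeFinset_eq hcard)

end SimpleGraph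

theorem card_edgeFinset_turanGraph_seven_three : #(turanGraph 7 3).edgeFinset = 16 := by
  simp [card_edgeFinset_turanGraph]

instance : DecidableRel turan73.Adj := fun u v =>
  inferInstanceAs (Decidable (turanPart u ≠ turanPart v))

/-- `turanGraph 7 3` has parts `{0, 3, 6}`, `{1, 4}`, `{2, 5}` (residues mod 3); they are sent
onto the parts `{0, 1, 2}`, `{3, 4}`, `{5, 6}` of `turan73`. -/
def turanGraphIsoTuran73 : turanGraph 7 3 ≃g turan73 where
  toEquiv := ⟨![0, 3, 5, 1, 4, 6, 2], ![0, 3, 6, 1, 4, 2, 5], by decide, by decide⟩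
  map_rel_iff' := by decide

/-- Any `K₄`-free graph on 7 vertices with 16 edges is isomorphic to the Turán
graph `T(7,3)`. -/
theorem k4_free_16_edges_iso_turan (G : SimpleGraph (Fin 7)) [DecidableRel G.Adj]
    (hfree : G.CliqueFree 4) (hedges : G.edgeFinset.card = 16) :
    Nonempty (G ≃g turan73) := by
  obtain ⟨f⟩ := hfree.nonempty_iso_turanGraph_of_card_edgeFinset_eq (r := 3) (by norm_num)
    (by rw [Fintype.card_fin, card_edgeFinset_turanGraph_seven_three, hedges])
  exact ⟨f.trans turanGraphIsoTuran73⟩
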